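/- arXiv:1811.08894 — 7 statements merged into one kernel-verified Lean document; each statement's English description precedes it below -/
import Mathlib

section
/- Let n ≥ 1, N = 2^n, and let r = 2^s with 0 ≤ s ≤ n. Then the periodic state Ψ^n_{0,r} is separable; explicitly, Ψ^n_{0,r} x = 1/√(2^{n-s}) if 2^s divides x and 0 otherwise, and this equals the product state |+⟩^{⊗(n−s)} ⊗ |0⟩^{⊗s}, i.e. Ψ^n_{0,r} x = ∏_{i<n} v i (bit i x) where v i = (1/√2, 1/√2) for i < n−s and v i = (1, 0) for n−s ≤ i < n. -/
open scoped BigOperators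

noncomputable section

/-- `bit n i x` is the i-th binary digit of `x`, counted from the most significant. -/
def bit (n : ℕ) (i : Fin n) (x : Fin (2^n)) : Fin 2 :=
  ⟨((x : ℕ) / 2^(n - 1 - (i : ℕ))) % 2, Nat.mod_lt _ (by norm_num)⟩

/-- An n-qubit state is separable if its amplitudes factor as a product over the qubits. -/
def Separable (n : ℕ) (ψ : Fin (2^n) → ℂ) : Prop :=
  ∃ v : Fin n → Fin 2 → ℂ, ∀ x, ψ x = ∏ i, v i (bit n i x)

/-- The periodic state with shift `l` and period `r`:
amplitude `1/√A` at `x = l + i·r` for `0 ≤ i < A`, with `A = ⌈(2^n - l)/r⌉`. -/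
def periodicState (n l r : ℕ) : Fin (2^n) → ℂ := fun x =>
  if ∃ i < (2^n - l + r - 1) / r, (x : ℕ) = l + i * r
  then (1 : ℂ) / Real.sqrt (((2^n - l + r - 1) / r : ℕ)) else 0

/-- Quantum Fourier transform of an n-qubit state. -/
def QFT (n : ℕ) (ψ : Fin (2^n) → ℂ) : Fin (2^n) → ℂ := fun y =>
  (1 / (Real.sqrt (2^n) : ℝ) : ℂ) * ∑ x : Fin (2^n),
    Complex.exp (2 * Real.pi * Complex.I * (x : ℕ) * (y : ℕ) / ((2^n : ℕ) : ℂ)) * ψ x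

/-- The generalized GHZ state. -/
def GHZ (n : ℕ) : Fin (2^n) → ℂ := fun x =>
  if (x : ℕ) = 0 ∨ (x : ℕ) = 2^n - 1 then (1 : ℂ) / Real.sqrt 2 else 0

/-- SLOCC equivalence of two n-qubit states. -/
def SLOCCEquiv (n : ℕ) (ψ φ : Fin (2^n) → ℂ) : Prop :=
  ∃ (g : Fin n → Matrix (Fin 2) (Fin 2) ℂ) (c : ℂ),
    c ≠ 0 ∧ (∀ i, IsUnit (g i)) ∧
    ∀ x, φ x = c * ∑ y : Fin (2^n), (∏ i, g i (bit n i x) (bit n i y)) * ψ y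


lemma aux_dvd (x s : ℕ) (h : ∀ j < s, x / 2^j % 2 = 0) : 2^s ∣ x := by
  induction s generalizing x with
  | zero => simpa using Nat.one_dvd x
  | succ s ih =>
    have h0 : x % 2 = 0 := by simpa using h 0 (Nat.succ_pos s)
    obtain ⟨y, rfl⟩ := Nat.dvd_of_mod_eq_zero h0
    have hy : 2^s ∣ y := by
      apply ih
      intro j hj
      have := h (j+1) (by omega)
      rwa [pow_succ', Nat.mul_div_mul_left _ _ (by norm_num)] at this
    rw [pow_succ']
    exact mul_dvd_mul_left 2 hy

/-- for `l = 0` and `r = 2^s` with `s ≤ n`, the periodic state is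
`|+⟩^{⊗(n−s)} ⊗ |0⟩^{⊗s}`, hence separable. -/
theorem stmt_0 (n s : ℕ) (hn : 1 ≤ n) (hs : s ≤ n) :
    (∀ x : Fin (2^n), periodicState n 0 (2^s) x =
      if 2^s ∣ (x : ℕ) then (1 : ℂ) / Real.sqrt (2^(n-s)) else 0) ∧
    Separable n (periodicState n 0 (2^s)) ∧
    (∀ x : Fin (2^n), periodicState n 0 (2^s) x =
      ∏ i : Fin n,
        (if (i : ℕ) < n - s
         then fun _ : Fin 2 => (1 : ℂ) / Real.sqrt 2
         else fun b : Fin 2 => if b = 0 then 1 else 0) (bit n i x)) := by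
  have h2s : 0 < 2^s := pow_pos (by norm_num) s
  have hA : (2^n - 0 + 2^s - 1) / 2^s = 2^(n-s) := by
    have hpow : 2^s * 2^(n-s) = 2^n := by rw [← pow_add]; congr 1; omega
    have he : 2^n - 0 + 2^s - 1 = 2^s * 2^(n-s) + (2^s - 1) := by omega
    rw [he, Nat.mul_add_div h2s, Nat.div_eq_of_lt (by omega), Nat.add_zero]
  have hcond : ∀ x : Fin (2^n),
      (∃ i < 2^(n-s), (x : ℕ) = 0 + i * 2^s) ↔ 2^s ∣ (x : ℕ) := by
    intro x
    constructor
    · rintro ⟨i, _, hx⟩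
      rw [hx]
      exact ⟨i, by ring⟩
    · rintro ⟨m, hm⟩
      refine ⟨m, ?_, by rw [hm, Nat.zero_add, Nat.mul_comm]⟩
      have hx : (x : ℕ) < 2^n := x.2
      have hn2 : 2^n = 2^s * 2^(n-s) := by
        rw [← pow_add]; congr 1; omega
      rw [hm, hn2] at hx
      exact lt_of_mul_lt_mul_left hx (Nat.zero_le _)
  have hbit0 : ∀ x : ℕ, 2^s ∣ x → ∀ j < s, x / 2^j % 2 = 0 := by
    intro x hd j hj
    obtain ⟨m, rfl⟩ := hd
    have hsj : 2^s = 2^j * 2^(s-j) := by rw [← pow_add]; congr 1; omega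
    rw [hsj, mul_assoc, Nat.mul_div_cancel_left _ (pow_pos (by norm_num) j)]
    have : 2 ∣ 2^(s-j) * m :=
      dvd_mul_of_dvd_left (dvd_pow_self 2 (by omega)) m
    omega
  have hprod : ∀ x : Fin (2^n),
      (∏ i : Fin n,
        (if (i : ℕ) < n - s
         then fun _ : Fin 2 => (1 : ℂ) / Real.sqrt 2
         else fun b : Fin 2 => if b = 0 then 1 else 0) (bit n i x)) =
      if 2^s ∣ (x : ℕ) then (1 : ℂ) / Real.sqrt (2^(n-s)) else 0 := by
    intro x
    set F : ℕ → ℂ := fun i =>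
      if i < n - s then (1 : ℂ) / Real.sqrt 2
      else (if (x : ℕ) / 2^(n-1-i) % 2 = 0 then 1 else 0) with hF
    have hstep : (∏ i : Fin n,
        (if (i : ℕ) < n - s
         then fun _ : Fin 2 => (1 : ℂ) / Real.sqrt 2
         else fun b : Fin 2 => if b = 0 then 1 else 0) (bit n i x)) =
        ∏ i : Fin n, F (i : ℕ) := by
      apply Finset.prod_congr rfl
      intro i _
      by_cases hi : (i : ℕ) < n - s
      · simp [hF, hi]
      · simp [hF, hi, bit, Fin.ext_iff]
    rw [hstep, Fin.prod_univ_eq_prod_range F n]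
    by_cases hd : 2^s ∣ (x : ℕ)
    · rw [if_pos hd]
      have hsplit : ∏ i ∈ Finset.range n, F i =
          (∏ i ∈ Finset.range (n-s), F i) * ∏ i ∈ Finset.range s, F (n - s + i) := by
        rw [← Finset.prod_range_add F (n-s) s, Nat.sub_add_cancel hs]
      rw [hsplit]
      have h1 : (∏ i ∈ Finset.range (n-s), F i) = ((1:ℂ) / Real.sqrt 2)^(n-s) := by
        rw [Finset.prod_congr rfl (g := fun _ => (1:ℂ) / Real.sqrt 2)
          (fun i hi => by simp only [Finset.mem_range] at hi; simp [hF, hi]),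
          Finset.prod_const, Finset.card_range]
      have h2 : (∏ i ∈ Finset.range s, F (n - s + i)) = 1 := by
        apply Finset.prod_eq_one
        intro i hi
        simp only [Finset.mem_range] at hi
        have hni : ¬ (n - s + i < n - s) := by omega
        have hb := hbit0 (x : ℕ) hd (n - 1 - (n - s + i)) (by omega)
        simp [hF, hni, hb]
      rw [h1, h2, mul_one, div_pow, one_pow]
      have hsq : Real.sqrt (2^(n-s)) = (Real.sqrt 2)^(n-s) := by
        rw [show (2:ℝ)^(n-s) = ((Real.sqrt 2)^(n-s))^2 by
            rw [← pow_mul, mul_comm, pow_mul, Real.sq_sqrt (by norm_num)],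
          Real.sqrt_sq (by positivity)]
      rw [hsq]
      norm_cast
    · rw [if_neg hd]
      have hnall : ¬ ∀ j < s, (x : ℕ) / 2^j % 2 = 0 := fun h => hd (aux_dvd _ _ h)
      push_neg at hnall
      obtain ⟨j, hj, hji⟩ := hnall
      apply Finset.prod_eq_zero (Finset.mem_range.mpr (show n - 1 - j < n by omega))
      have h1 : ¬ (n - 1 - j < n - s) := by omega
      have h2 : n - 1 - (n - 1 - j) = j := by omega
      simp [hF, h1, h2, hji]
  have part1 : ∀ x : Fin (2^n), periodicState n 0 (2^s) x =
      if 2^s ∣ (x : ℕ) then (1 : ℂ) / Real.sqrt (2^(n-s)) else 0 := by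
    intro x
    unfold periodicState
    rw [hA]
    by_cases hd : 2^s ∣ (x : ℕ)
    · rw [if_pos ((hcond x).mpr hd), if_pos hd]
      norm_cast
    · rw [if_neg (fun h => hd ((hcond x).mp h)), if_neg hd]
  have part3 : ∀ x : Fin (2^n), periodicState n 0 (2^s) x =
      ∏ i : Fin n,
        (if (i : ℕ) < n - s
         then fun _ : Fin 2 => (1 : ℂ) / Real.sqrt 2
         else fun b : Fin 2 => if b = 0 then 1 else 0) (bit n i x) :=
    fun x => (part1 x).trans (hprod x).symm
  exact ⟨part1, ⟨_, part3⟩, part3⟩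
end
end

section
/- Let n ≥ 2, N = 2^n, and let r = 2^s with 0 ≤ s ≤ n−1. Then the periodic state Ψ^n_{0,r} factors off its first qubit as |+⟩: for every x < N one has Ψ^n_{0,r} x = (1/√2) · Ψ^{n−1}_{0,r} (x mod 2^{n−1}), where Ψ^{n−1}_{0,r} is the (n−1)-qubit periodic state with shift 0 and period r. -/
open scoped BigOperators

noncomputable section

/-! When `r ∣ 2^n` the ceiling `⌈2^n / r⌉` is exact, so `Ψ^n_{0,r}` is `(2^n / r)^{-1/2}` times
the indicator of the multiples of `r`. For `r = 2^s` with `s ≤ n - 1`, `r` also divides `2^(n-1)`,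
so reducing `x` modulo `2^(n-1)` does not change whether `r ∣ x`, and the normalisations differ by
`2^n / r = 2 · (2^(n-1) / r)`, i.e. by the factor `1/√2`. -/

lemma Nat.add_sub_one_div_of_dvd {N r : ℕ} (hr : 0 < r) (h : r ∣ N) :
    (N + r - 1) / r = N / r := by
  obtain ⟨k, rfl⟩ := h
  rw [show r * k + r - 1 = (r - 1) + r * k by omega, Nat.add_mul_div_left _ _ hr,
    Nat.div_eq_of_lt (by omega), Nat.mul_div_cancel_left _ hr, zero_add]

lemma exists_lt_div_eq_mul_iff_dvd {N r x : ℕ} (h : r ∣ N) (hx : x < N) :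
    (∃ i < N / r, x = 0 + i * r) ↔ r ∣ x := by
  constructor
  · rintro ⟨i, -, rfl⟩
    exact ⟨i, by ring⟩
  · rintro ⟨i, rfl⟩
    refine ⟨i, ?_, by ring⟩
    obtain ⟨k, rfl⟩ := h
    have hr : 0 < r := Nat.pos_of_ne_zero (by rintro rfl; simp at hx)
    rw [Nat.mul_div_cancel_left _ hr]
    exact Nat.lt_of_mul_lt_mul_left hx

lemma periodicState_zero_of_dvd {n r : ℕ} (hr : 0 < r) (h : r ∣ 2 ^ n) (x : Fin (2 ^ n)) :
    periodicState n 0 r x = if r ∣ (x : ℕ) then (1 : ℂ) / Real.sqrt ((2 ^ n / r : ℕ)) else 0 := by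
  simp only [periodicState, Nat.sub_zero, Nat.add_sub_one_div_of_dvd hr h,
    exists_lt_div_eq_mul_iff_dvd h x.isLt]

/-- for `l = 0` and `r = 2^s` with `s ≤ n−1`, the periodic state factors
off its first qubit as `|+⟩`. -/
theorem stmt_1 (n s : ℕ) (hn : 2 ≤ n) (hs : s ≤ n - 1) :
    ∀ x : Fin (2^n),
      periodicState n 0 (2^s) x =
        ((1 / Real.sqrt 2 : ℝ) : ℂ) *
          periodicState (n-1) 0 (2^s) ⟨(x : ℕ) % 2^(n-1), Nat.mod_lt _ (by positivity)⟩ := by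
  intro x
  have hr_half : 2 ^ s ∣ 2 ^ (n - 1) := pow_dvd_pow 2 hs
  have hpow : 2 ^ n = 2 * 2 ^ (n - 1) := by rw [← pow_succ']; congr 1; omega
  have hr : 2 ^ s ∣ 2 ^ n := hpow ▸ hr_half.mul_left 2
  rw [periodicState_zero_of_dvd (by positivity) hr, periodicState_zero_of_dvd (by positivity) hr_half]
  simp only [Nat.dvd_mod_iff hr_half]
  split_ifs
  · rw [hpow, Nat.mul_div_assoc _ hr_half, Nat.cast_mul, Nat.cast_two,
      Real.sqrt_mul zero_le_two]
    push_cast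
    ring
  · rw [mul_zero]
end
end

section
/- Let n ≥ 1, N = 2^n, r = 2^s with 0 ≤ s ≤ n, and let the shift satisfy 0 ≤ l < 2^s. Then the periodic state Ψ^n_{l,r} is separable and equals |+⟩^{⊗(n−s)} ⊗ |l⟩^{[s]}: explicitly, Ψ^n_{l,r} x = 1/√(2^{n−s}) if x ≡ l (mod 2^s) and 0 otherwise, which factorizes as Ψ^n_{l,r} x = ∏_{i<n} v i (bit i x) with v i = (1/√2, 1/√2) for i < n−s and, for n−s ≤ i < n, v i the indicator of the corresponding binary digit of l written with s bits. -/
open scoped BigOperators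

noncomputable section

/-! When the period `r` divides `N = 2^n` and `l < r`, the points `l + i r` below `N` are exactly
the `x < N` with `x ≡ l (mod r)`, and there are `N / r` of them. For `r = 2^s` the congruence
says that the `s` low-order bits of `x` are those of `l`, while the `n - s` high-order bits are
free: the amplitude is a constant times a product of indicators of the low bits, and the
constant `1 / √(2^(n-s))` splits as one factor `1 / √2` per free qubit. -/

lemma Real.sqrt_pow {x : ℝ} (hx : 0 ≤ x) (k : ℕ) : √(x ^ k) = √x ^ k := by
  rw [← Real.sqrt_sq (pow_nonneg (Real.sqrt_nonneg x) k), ← pow_mul, mul_comm, pow_mul,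
    Real.sq_sqrt hx]

lemma sub_add_sub_one_div_of_dvd {N r l : ℕ} (hr : r ∣ N) (hl : l < r) :
    (N - l + r - 1) / r = N / r := by
  obtain ⟨k, rfl⟩ := hr
  rcases Nat.eq_zero_or_pos k with rfl | hk
  · simp [Nat.div_eq_of_lt (show r - 1 < r by omega)]
  · have hsplit : r * k - l + r - 1 = (r - 1 - l) + k * r := by
      have : r ≤ r * k := Nat.le_mul_of_pos_right r hk
      rw [Nat.mul_comm] at this ⊢
      omega
    rw [hsplit, Nat.add_mul_div_right _ _ (by omega), Nat.div_eq_of_lt (by omega),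
      Nat.mul_div_cancel_left _ (by omega), zero_add]

lemma exists_eq_add_mul_iff_mod_eq {N r l x : ℕ} (hr : r ∣ N) (hl : l < r) (hx : x < N) :
    (∃ i < N / r, x = l + i * r) ↔ x % r = l := by
  constructor
  · rintro ⟨i, -, rfl⟩
    rw [Nat.add_mul_mod_self_right, Nat.mod_eq_of_lt hl]
  · intro h
    exact ⟨x / r, Nat.div_lt_div_of_lt_of_dvd hr hx, h ▸ (Nat.mod_add_div' x r).symm⟩

lemma periodicState_of_dvd {n l r : ℕ} (hr : r ∣ 2 ^ n) (hl : l < r) (x : Fin (2 ^ n)) :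
    periodicState n l r x = if (x : ℕ) % r = l then (1 : ℂ) / √((2 ^ n / r : ℕ) : ℝ) else 0 := by
  simp only [periodicState, sub_add_sub_one_div_of_dvd hr hl,
    exists_eq_add_mul_iff_mod_eq hr hl x.isLt]

lemma testBit_eq_testBit_iff (x y j : ℕ) :
    x.testBit j = y.testBit j ↔ x / 2 ^ j % 2 = y / 2 ^ j % 2 := by
  simp only [Nat.testBit_eq_decide_div_mod_eq, decide_eq_decide]
  omega

lemma mod_two_pow_eq_iff (x y s : ℕ) :
    x % 2 ^ s = y % 2 ^ s ↔ ∀ j < s, x / 2 ^ j % 2 = y / 2 ^ j % 2 := by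
  simp only [← testBit_eq_testBit_iff]
  constructor
  · intro h j hj
    simpa [Nat.testBit_mod_two_pow, hj] using congrArg (Nat.testBit · j) h
  · intro h
    refine Nat.eq_of_testBit_eq fun j => ?_
    by_cases hj : j < s <;> simp [Nat.testBit_mod_two_pow, hj, h]

lemma forall_bit_eq_iff_mod_eq {n s : ℕ} (hs : s ≤ n) (x : Fin (2 ^ n)) (y : ℕ) :
    (∀ i : Fin n, n - s ≤ i → (bit n i x : ℕ) = y / 2 ^ (n - 1 - i) % 2) ↔
      (x : ℕ) % 2 ^ s = y % 2 ^ s := by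
  rw [mod_two_pow_eq_iff]
  simp only [bit]
  constructor
  · intro h j hj
    have := h ⟨n - 1 - j, by omega⟩ (by simp only; omega)
    rwa [show n - 1 - (n - 1 - j) = j by omega] at this
  · intro h i hi
    exact h _ (by omega)

lemma prod_ite_lt_const_boole {M : Type*} [CommMonoidWithZero M] {n k : ℕ} (hk : k ≤ n) (c : M)
    (p : Fin n → Prop) [DecidablePred p] :
    ∏ i : Fin n, (if (i : ℕ) < k then c else if p i then 1 else 0) =
      c ^ k * if ∀ i : Fin n, k ≤ i → p i then 1 else 0 := by
  rw [Finset.prod_ite, Finset.prod_const, Fin.card_filter_val_lt, min_eq_right hk,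
    Finset.prod_boole]
  simp [not_lt]

theorem stmt_4_general (n s l : ℕ) (hs : s ≤ n) (hl : l < 2^s) :
    (∀ x : Fin (2^n), periodicState n l (2^s) x =
      if (x : ℕ) % 2^s = l then (1 : ℂ) / Real.sqrt (2^(n-s)) else 0) ∧
    (∀ x : Fin (2^n), periodicState n l (2^s) x =
      ∏ i : Fin n,
        (if (i : ℕ) < n - s
         then fun _ : Fin 2 => (1 : ℂ) / Real.sqrt 2
         else fun b : Fin 2 => if (b : ℕ) = (l / 2^(n-1-(i : ℕ))) % 2 then 1 else 0)
          (bit n i x)) := by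
  have hform : ∀ x : Fin (2^n), periodicState n l (2^s) x =
      if (x : ℕ) % 2^s = l then (1 : ℂ) / Real.sqrt (2^(n-s)) else 0 := fun x => by
    rw [periodicState_of_dvd (pow_dvd_pow 2 hs) hl, Nat.pow_div hs two_pos]
    push_cast
    rfl -- the two sides differ only in their `Decidable` instances
  refine ⟨hform, fun x => ?_⟩
  simp only [ite_apply]
  rw [hform, prod_ite_lt_const_boole (Nat.sub_le n s), Real.sqrt_pow zero_le_two]
  simp only [forall_bit_eq_iff_mod_eq hs, Nat.mod_eq_of_lt hl]
  split_ifs <;> simp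

/-- for `r = 2^s` and `0 ≤ l < 2^s`, the periodic state equals
`|+⟩^{⊗(n−s)} ⊗ |l⟩^{[s]}` and is separable. -/
theorem stmt_4 (n s l : ℕ) (hn : 1 ≤ n) (hs : s ≤ n) (hl : l < 2^s) :
    (∀ x : Fin (2^n), periodicState n l (2^s) x =
      if (x : ℕ) % 2^s = l then (1 : ℂ) / Real.sqrt (2^(n-s)) else 0) ∧
    (∀ x : Fin (2^n), periodicState n l (2^s) x =
      ∏ i : Fin n,
        (if (i : ℕ) < n - s
         then fun _ : Fin 2 => (1 : ℂ) / Real.sqrt 2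
         else fun b : Fin 2 => if (b : ℕ) = (l / 2^(n-1-(i : ℕ))) % 2 then 1 else 0)
          (bit n i x)) :=
  stmt_4_general n s l hs hl
end
end

section
/- Let n ≥ 2 and N = 2^n. The periodic state Ψ^n_{1,1} (shift l = 1, period r = 1), whose amplitude is 1/√(N−1) at every x with 1 ≤ x < N and 0 at x = 0, satisfies Ψ^n_{1,1} = (√N/√(N−1)) |+⟩^{⊗n} − (1/√(N−1)) |0⟩^{⊗n} and is SLOCC-equivalent to GHZ_n. -/
open scoped BigOperators

noncomputable section

/-!
`Ψ^n_{1,1}` vanishes only at `0`, so it is `(√N |+⟩^{⊗n} - |0⟩^{⊗n}) / √(N - 1)`, a combination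
of two product states. The local matrix `g = [[0, 1], [t, -t]]` sends `(1, 1)` to `|0⟩` and `|0⟩`
to `t|1⟩`, hence `g^{⊗n}` maps `Ψ^n_{1,1}` to a multiple of `|0…0⟩ - tⁿ|1…1⟩`, which is
proportional to `GHZ_n` once `tⁿ = -1`.
-/

open scoped Matrix

def bitsEquiv (n : ℕ) : Fin (2^n) ≃ (Fin n → Fin 2) :=
  finFunctionFinEquiv.symm.trans (Fin.revPerm.arrowCongr (Equiv.refl _))

lemma bit_eq_bitsEquiv {n : ℕ} (i : Fin n) (x : Fin (2^n)) : bit n i x = bitsEquiv n x i := by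
  ext
  simp only [bit, bitsEquiv, Equiv.trans_apply, Equiv.arrowCongr_apply, Function.comp_apply,
    Equiv.refl_apply, Fin.revPerm_symm, Fin.revPerm_apply, finFunctionFinEquiv_symm_apply_val,
    Fin.val_rev]
  rw [show n - 1 - (i : ℕ) = n - (i + 1) by omega]

lemma bit_injective {n : ℕ} {x y : Fin (2^n)} (h : ∀ i, bit n i x = bit n i y) : x = y :=
  (bitsEquiv n).injective (funext fun i => by simpa only [bit_eq_bitsEquiv] using h i)

lemma forall_bit_eq_zero_iff {n : ℕ} (x : Fin (2^n)) : (∀ i, bit n i x = 0) ↔ (x : ℕ) = 0 := by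
  have bit_zero : ∀ i, bit n i ⟨0, Nat.two_pow_pos n⟩ = 0 := fun i => by ext; simp [bit]
  refine ⟨fun h => ?_, fun h i => ?_⟩
  · simpa using congrArg Fin.val (bit_injective fun i => (h i).trans (bit_zero i).symm)
  · exact (congrArg (bit n i) (Fin.ext h)).trans (bit_zero i)

lemma forall_bit_eq_one_iff {n : ℕ} (x : Fin (2^n)) :
    (∀ i, bit n i x = 1) ↔ (x : ℕ) = 2^n - 1 := by
  have bit_last : ∀ i, bit n i ⟨2^n - 1, Nat.sub_lt (Nat.two_pow_pos n) one_pos⟩ = 1 := by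
    intro i
    have := Nat.testBit_two_pow_sub_one n (n - 1 - i)
    rw [Nat.testBit_eq_decide_div_mod_eq, decide_eq_decide] at this
    ext
    simpa [bit] using this.2 (by omega)
  refine ⟨fun h => ?_, fun h i => ?_⟩
  · simpa using congrArg Fin.val (bit_injective fun i => (h i).trans (bit_last i).symm)
  · exact (congrArg (bit n i) (Fin.ext h)).trans (bit_last i)

lemma sum_prod_bit {R : Type*} [CommSemiring R] {n : ℕ} (F : Fin n → Fin 2 → R) :
    ∑ y : Fin (2^n), ∏ i, F i (bit n i y) = ∏ i, ∑ j, F i j := by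
  simp only [bit_eq_bitsEquiv]
  rw [(bitsEquiv n).sum_comp (fun f => ∏ i, F i (f i)), Fintype.prod_sum]

section LocalOperators

variable {n : ℕ}

def productState (v : Fin n → Fin 2 → ℂ) : Fin (2^n) → ℂ := fun x => ∏ i, v i (bit n i x)

/-- The Kronecker product `g 0 ⊗ ⋯ ⊗ g (n - 1)`. -/
def tensorMatrix (g : Fin n → Matrix (Fin 2) (Fin 2) ℂ) : Matrix (Fin (2^n)) (Fin (2^n)) ℂ :=
  Matrix.of fun x y => ∏ i, g i (bit n i x) (bit n i y)

lemma tensorMatrix_mulVec_productState (g : Fin n → Matrix (Fin 2) (Fin 2) ℂ)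
    (v : Fin n → Fin 2 → ℂ) :
    tensorMatrix g *ᵥ productState v = productState fun i => g i *ᵥ v i := by
  ext x
  simp only [Matrix.mulVec, dotProduct, tensorMatrix, productState, Matrix.of_apply,
    ← Finset.prod_mul_distrib]
  exact sum_prod_bit fun i j => g i (bit n i x) j * v i j

lemma productState_const_single (b : Fin 2) (c : ℂ) (x : Fin (2^n)) :
    productState (fun _ => Pi.single b c) x = if ∀ i, bit n i x = b then c ^ n else 0 := by
  simp only [productState, Pi.single_apply, Fintype.prod_ite_zero, Finset.prod_const,
    Finset.card_univ, Fintype.card_fin]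

lemma productState_const_one : productState (n := n) (fun _ _ => 1) = 1 := by
  ext x
  simp [productState]

end LocalOperators

lemma periodicState_one_one {n : ℕ} (x : Fin (2^n)) :
    periodicState n 1 1 x = if (x : ℕ) = 0 then 0 else ((1 / Real.sqrt (2^n - 1) : ℝ) : ℂ) := by
  have hx := x.isLt
  have support : (∃ i < 2^n - 1, (x : ℕ) = 1 + i * 1) ↔ (x : ℕ) ≠ 0 :=
    ⟨fun ⟨i, _, hi⟩ => by omega, fun h => ⟨x - 1, by omega, by omega⟩⟩
  simp only [periodicState, Nat.add_sub_cancel, Nat.div_one, support, ite_not,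
    Nat.cast_sub Nat.one_le_two_pow, Nat.cast_pow, Nat.cast_ofNat, Nat.cast_one,
    Complex.ofReal_div, Complex.ofReal_one]

lemma periodicState_one_one_eq_smul_sub (n : ℕ) :
    periodicState n 1 1 = ((1 / Real.sqrt (2^n - 1) : ℝ) : ℂ) •
      (productState (fun _ _ => 1) - productState (fun _ => Pi.single 0 1)) := by
  ext x
  simp only [periodicState_one_one, productState_const_one, productState_const_single,
    forall_bit_eq_zero_iff, Pi.smul_apply, Pi.sub_apply, Pi.one_apply, one_pow, smul_eq_mul]
  split_ifs <;> simp

lemma GHZ_eq_smul_add {n : ℕ} (hn : n ≠ 0) :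
    GHZ n = (1 / (Real.sqrt 2 : ℂ)) •
      (productState (fun _ => Pi.single 0 1) + productState (fun _ => Pi.single 1 1)) := by
  ext x
  have : 1 < 2^n := Nat.one_lt_two_pow hn
  simp only [GHZ, productState_const_single, forall_bit_eq_zero_iff, forall_bit_eq_one_iff,
    one_pow, Pi.smul_apply, Pi.add_apply, smul_eq_mul]
  split_ifs <;> first | omega | simp

lemma tensorMatrix_mulVec_periodicState_one_one {n : ℕ} {t : ℂ} (ht : t ^ n = -1) :
    tensorMatrix (fun _ => !![0, 1; t, -t]) *ᵥ periodicState n 1 1 =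
      ((1 / Real.sqrt (2^n - 1) : ℝ) : ℂ) •
        (productState (fun _ => Pi.single 0 1) + productState (fun _ => Pi.single 1 1)) := by
  have mulVec_one : !![0, 1; t, -t] *ᵥ (fun _ => 1) = Pi.single 0 1 := by
    ext j; fin_cases j <;> simp [Matrix.mulVec, dotProduct]
  have mulVec_single : !![0, 1; t, -t] *ᵥ Pi.single 0 1 = Pi.single 1 t := by
    ext j; fin_cases j <;> simp [Matrix.mulVec, dotProduct]
  rw [periodicState_one_one_eq_smul_sub, Matrix.mulVec_smul, Matrix.mulVec_sub,
    tensorMatrix_mulVec_productState, tensorMatrix_mulVec_productState, mulVec_one,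
    mulVec_single]
  congr 1
  ext x
  simp only [Pi.sub_apply, Pi.add_apply, productState_const_single, ht, one_pow]
  split_ifs <;> simp

lemma sloccEquiv_periodicState_one_one_GHZ {n : ℕ} (hn : n ≠ 0) :
    SLOCCEquiv n (periodicState n 1 1) (GHZ n) := by
  obtain ⟨t, ht⟩ := IsAlgClosed.exists_pow_nat_eq (-1 : ℂ) (Nat.pos_of_ne_zero hn)
  have t_ne_zero : t ≠ 0 := by rintro rfl; simp [zero_pow hn] at ht
  have hc : (Real.sqrt (2^n - 1) : ℂ) ≠ 0 :=
    Complex.ofReal_ne_zero.2 (Real.sqrt_ne_zero'.2 (by linarith [one_lt_pow₀ (one_lt_two (α := ℝ)) hn]))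
  have ghz : GHZ n = (Real.sqrt (2^n - 1) / Real.sqrt 2 : ℂ) •
      (tensorMatrix (fun _ => !![0, 1; t, -t]) *ᵥ periodicState n 1 1) := by
    rw [tensorMatrix_mulVec_periodicState_one_one ht, GHZ_eq_smul_add hn, smul_smul]
    congr 1
    push_cast
    field_simp
  refine ⟨fun _ => !![0, 1; t, -t], _, by simpa using hc, fun _ => ?_, fun x => congrFun ghz x⟩
  simp [Matrix.isUnit_iff_isUnit_det, Matrix.det_fin_two_of, t_ne_zero]

/-- `Ψ^n_{1,1} = (√N/√(N−1))|+⟩^{⊗n} − (1/√(N−1))|0⟩^{⊗n}` and it is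
SLOCC-equivalent to `GHZ_n`. -/
theorem stmt_6 (n : ℕ) (hn : 2 ≤ n) :
    (∀ x : Fin (2^n), periodicState n 1 1 x =
      ((Real.sqrt (2^n) / Real.sqrt (2^n - 1) : ℝ) : ℂ) * ((1 : ℂ) / Real.sqrt (2^n))
        - ((1 / Real.sqrt (2^n - 1) : ℝ) : ℂ) * (if (x : ℕ) = 0 then 1 else 0)) ∧
    SLOCCEquiv n (periodicState n 1 1) (GHZ n) := by
  refine ⟨fun x => ?_, sloccEquiv_periodicState_one_one_GHZ (by omega)⟩
  have : Real.sqrt (2^n) ≠ 0 := by positivity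
  rw [periodicState_one_one]
  split_ifs <;> push_cast <;> field_simp <;> ring
end
end

section
/- Let n ≥ 1, N = 2^n, and let j < N. Then the quantum Fourier transform of the computational basis state e_j is separable: the state y ↦ (1/√N) exp(2πi·j·y/N) factorizes as a product over the n qubits, QFT(e_j) y = ∏_{i<n} v i (bit i y) with v i (b) = (1/√2) exp(2πi·j·b·2^{n−1−i}/N) for b ∈ {0,1}. -/
open scoped BigOperators

noncomputable section

lemma sum_bits_aux (m y : ℕ) : ∑ k ∈ Finset.range m, (y / 2^k % 2) * 2^k = y % 2^m := by
  induction m with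
  | zero => simp [Nat.mod_one]
  | succ m ih =>
    rw [Finset.sum_range_succ, ih, pow_succ, Nat.mod_mul]
    ring

lemma sum_bits (n : ℕ) (y : Fin (2^n)) :
    ∑ i : Fin n, (bit n i y : ℕ) * 2^(n-1-(i:ℕ)) = (y:ℕ) := by
  calc ∑ i : Fin n, (bit n i y : ℕ) * 2^(n-1-(i:ℕ))
      = ∑ k ∈ Finset.range n, ((y:ℕ) / 2^(n-1-k) % 2) * 2^(n-1-k) :=
        Fin.sum_univ_eq_sum_range (fun k => ((y:ℕ) / 2^(n-1-k) % 2) * 2^(n-1-k)) n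
    _ = ∑ k ∈ Finset.range n, ((y:ℕ) / 2^k % 2) * 2^k :=
        Finset.sum_range_reflect (fun k => ((y:ℕ) / 2^k % 2) * 2^k) n
    _ = (y:ℕ) % 2^n := sum_bits_aux n y
    _ = (y:ℕ) := Nat.mod_eq_of_lt y.isLt

lemma sqrt_pow_two (n : ℕ) : Real.sqrt (2^n) = (Real.sqrt 2)^n := by
  induction n with
  | zero => simp
  | succ m ih => rw [pow_succ, Real.sqrt_mul (by positivity), ih, pow_succ]

lemma key (n : ℕ) (j : Fin (2^n)) (y : Fin (2^n)) :
    QFT n (fun x => if x = j then 1 else 0) y =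
      ∏ i : Fin n,
        ((1 / Real.sqrt 2 : ℝ) : ℂ) *
          Complex.exp (2 * Real.pi * Complex.I * (j : ℕ) *
            (((bit n i y : ℕ) * 2^(n-1-(i : ℕ)) : ℕ)) / ((2^n : ℕ) : ℂ)) := by
  have hL : QFT n (fun x => if x = j then 1 else 0) y =
      (1 / (Real.sqrt (2^n) : ℝ) : ℂ) *
        Complex.exp (2 * Real.pi * Complex.I * (j : ℕ) * (y : ℕ) / ((2^n : ℕ) : ℂ)) := by
    unfold QFT
    rw [Finset.sum_congr rfl (fun x _ => mul_ite (x = j)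
      (Complex.exp (2 * Real.pi * Complex.I * (x : ℕ) * (y : ℕ) / ((2^n : ℕ) : ℂ))) 1 0)]
    simp
  rw [hL, Finset.prod_mul_distrib, Finset.prod_const, ← Complex.exp_sum]
  have hc : (1 : ℂ) / ((Real.sqrt (2^n) : ℝ) : ℂ) =
      ((1 / Real.sqrt 2 : ℝ) : ℂ) ^ (Finset.univ : Finset (Fin n)).card := by
    rw [Finset.card_univ, Fintype.card_fin]
    push_cast [sqrt_pow_two n]
    rw [one_div, one_div, inv_pow]
  rw [hc]
  congr 1
  have hsum := sum_bits n y
  have : ∑ i : Fin n, 2 * (Real.pi:ℂ) * Complex.I * (j : ℕ) *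
      (((bit n i y : ℕ) * 2^(n-1-(i : ℕ)) : ℕ) : ℂ) / ((2^n : ℕ) : ℂ)
      = 2 * (Real.pi:ℂ) * Complex.I * (j : ℕ) *
        ((∑ i : Fin n, ((bit n i y : ℕ) * 2^(n-1-(i:ℕ)) : ℕ) : ℕ) : ℂ) / ((2^n : ℕ) : ℂ) := by
    push_cast
    rw [Finset.mul_sum, Finset.sum_div]
  rw [this, hsum]

/-- the QFT of a computational basis state is separable, with the
explicit product-representation factors. -/
theorem stmt_13 (n : ℕ) (hn : 1 ≤ n) (j : Fin (2^n)) :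
    Separable n (QFT n (fun x => if x = j then 1 else 0)) ∧
    ∀ y : Fin (2^n),
      QFT n (fun x => if x = j then 1 else 0) y =
        ∏ i : Fin n,
          ((1 / Real.sqrt 2 : ℝ) : ℂ) *
            Complex.exp (2 * Real.pi * Complex.I * (j : ℕ) *
              (((bit n i y : ℕ) * 2^(n-1-(i : ℕ)) : ℕ)) / ((2^n : ℕ) : ℂ)) := by
  constructor
  · exact ⟨fun i b => ((1 / Real.sqrt 2 : ℝ) : ℂ) *
      Complex.exp (2 * Real.pi * Complex.I * (j : ℕ) *
        (((b : ℕ) * 2^(n-1-(i : ℕ)) : ℕ)) / ((2^n : ℕ) : ℂ)), fun y => key n j y⟩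
  · exact key n j
end
end

section
/- For n = 2 (so N = 4), the 2-qubit state Ψ₁ = (1/√2)(e_0 + e_1) (i.e. (|00⟩+|01⟩)/√2) is separable, its quantum Fourier transform equals Ψ₂ = (1/(2√2))(2·e_0 + (1+i)·e_1 + (1−i)·e_3), and Ψ₂ is NOT separable. -/
/-!
A two-qubit state is a 2×2 matrix of amplitudes `ψ (2a + b)`, and it is a product state
exactly when that matrix has rank at most one, i.e. when `ψ 0 * ψ 3 = ψ 1 * ψ 2`. On two qubits
the QFT is the 4-point discrete Fourier transform, whose root of unity is `i`. The input state
passes this determinant test trivially; its transform has `ψ 2 = 0` but `ψ 0 * ψ 3 ≠ 0`.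
-/

open scoped BigOperators

noncomputable section

open Complex Real

lemma exp_two_pi_mul_I_mul_div_four (m : ℕ) :
    exp (2 * π * I * m / 4) = I ^ m := by
  rw [show 2 * π * I * m / 4 = m * (π / 2 * I) by ring, Complex.exp_nat_mul,
    exp_pi_div_two_mul_I]

lemma QFT_two_apply (ψ : Fin (2^2) → ℂ) (y : Fin (2^2)) :
    QFT 2 ψ y = 1 / 2 * (ψ 0 + I ^ (y : ℕ) * ψ 1 +
      I ^ (2 * y : ℕ) * ψ 2 + I ^ (3 * y : ℕ) * ψ 3) := by
  have hsqrt : √(2 ^ 2) = 2 := Real.sqrt_sq zero_le_two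
  have hphase (x : ℕ) :
      exp (2 * π * I * x * (y : ℕ) / ((2 ^ 2 : ℕ) : ℂ)) = I ^ (x * y) := by
    rw [← exp_two_pi_mul_I_mul_div_four]
    push_cast
    ring_nf
  simp only [QFT, hsqrt, hphase]
  rw [show ∑ x : Fin (2^2), I ^ ((x : ℕ) * y) * ψ x = _ from Fin.sum_univ_four _]
  simp

lemma separable_two_iff (ψ : Fin (2^2) → ℂ) :
    Separable 2 ψ ↔ ∃ u w : Fin 2 → ℂ,
      ψ 0 = u 0 * w 0 ∧ ψ 1 = u 0 * w 1 ∧ ψ 2 = u 1 * w 0 ∧ ψ 3 = u 1 * w 1 := by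
  constructor
  · rintro ⟨v, hv⟩
    refine ⟨v 0, v 1, ?_, ?_, ?_, ?_⟩ <;> rw [hv, Fin.prod_univ_two] <;> rfl
  · rintro ⟨u, w, h0, h1, h2, h3⟩
    refine ⟨![u, w], fun x => ?_⟩
    fin_cases x <;> simpa [Fin.prod_univ_two, bit]

lemma separable_two_iff_mul_eq_mul (ψ : Fin (2^2) → ℂ) :
    Separable 2 ψ ↔ ψ 0 * ψ 3 = ψ 1 * ψ 2 := by
  rw [separable_two_iff]
  constructor
  · rintro ⟨u, w, h0, h1, h2, h3⟩
    rw [h0, h1, h2, h3]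
    ring
  · intro hdet
    by_cases ha : ψ 0 = 0
    · by_cases hb : ψ 1 = 0
      · exact ⟨![0, 1], ![ψ 2, ψ 3], by simp [ha], by simp [hb], by simp, by simp⟩
      · have hc : ψ 2 = 0 := by
          simpa [ha, hb] using hdet.symm
        refine ⟨![1, ψ 3 / ψ 1], ![0, ψ 1], by simp [ha], by simp, by simp [hc], ?_⟩
        simp [div_mul_cancel₀ _ hb]
    · refine ⟨![1, ψ 2 / ψ 0], ![ψ 0, ψ 1], by simp, by simp, ?_, ?_⟩
      · simp [div_mul_cancel₀ _ ha]
      · simp only [Matrix.cons_val_zero, Matrix.cons_val_one]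
        field_simp
        linear_combination hdet

/-- `Ψ₁ = (|00⟩+|01⟩)/√2` is separable, its QFT equals
`Ψ₂ = (1/(2√2))(2e₀ + (1+i)e₁ + (1−i)e₃)`, and `Ψ₂` is not separable. -/
theorem stmt_15 :
    Separable 2 (fun x : Fin (2^2) =>
      if (x : ℕ) = 0 ∨ (x : ℕ) = 1 then (1 : ℂ) / Real.sqrt 2 else 0) ∧
    (∀ y : Fin (2^2),
      QFT 2 (fun x => if (x : ℕ) = 0 ∨ (x : ℕ) = 1 then (1 : ℂ) / Real.sqrt 2 else 0) y =
        ((1 / (2 * Real.sqrt 2) : ℝ) : ℂ) *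
          (if (y : ℕ) = 0 then 2 else if (y : ℕ) = 1 then 1 + Complex.I
           else if (y : ℕ) = 3 then 1 - Complex.I else 0)) ∧
    ¬ Separable 2 (fun y : Fin (2^2) =>
        ((1 / (2 * Real.sqrt 2) : ℝ) : ℂ) *
          (if (y : ℕ) = 0 then 2 else if (y : ℕ) = 1 then 1 + Complex.I
           else if (y : ℕ) = 3 then 1 - Complex.I else 0)) := by
  refine ⟨?_, fun y => ?_, ?_⟩
  · rw [separable_two_iff_mul_eq_mul]
    simp
  · rw [QFT_two_apply]
    fin_cases y <;> simp <;> ring_nf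
  · rw [separable_two_iff_mul_eq_mul]
    simp [Complex.ext_iff]
end
end

section
/- For n = 3 (so N = 8), let W = (1/√3)(e_1 + e_2 + e_4) be the 3-qubit W state (i.e. (|001⟩+|010⟩+|100⟩)/√3). Then the quantum Fourier transform of W is SLOCC-equivalent to GHZ_3; in particular QFT(W) is not in the SLOCC orbit of W. -/
open scoped BigOperators

noncomputable section

/-- The 3-qubit W state `(|001⟩+|010⟩+|100⟩)/√3`. -/
def W3 : Fin (2^3) → ℂ := fun x =>
  if (x : ℕ) = 1 ∨ (x : ℕ) = 2 ∨ (x : ℕ) = 4 then (1 : ℂ) / Real.sqrt 3 else 0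

/-!
Under a local operation `g₀ ⊗ g₁ ⊗ g₂` followed by scaling by `c`, Cayley's hyperdeterminant of a
3-qubit state is multiplied by `c⁴ (det g₀ det g₁ det g₂)²`, so whether it vanishes is an SLOCC
invariant: it vanishes for `W` but not for `GHZ₃`. With `ζ = e^{iπ/4}`, `QFT(W)(y)` is proportional
to `ζ^y + ζ^{2y} + ζ^{4y}`, which splits as a sum of two product states whose factors on each qubit
are linearly independent; this exhibits `QFT(W)` as an invertible local image of `GHZ₃`.
-/

open Matrix

def localAct (n : ℕ) (g : Fin n → Matrix (Fin 2) (Fin 2) ℂ) (ψ : Fin (2^n) → ℂ) :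
    Fin (2^n) → ℂ :=
  fun x => ∑ y, (∏ i, g i (bit n i x) (bit n i y)) * ψ y

theorem sloccEquiv_iff {n : ℕ} {ψ φ : Fin (2^n) → ℂ} :
    SLOCCEquiv n ψ φ ↔ ∃ (g : Fin n → Matrix (Fin 2) (Fin 2) ℂ) (c : ℂ),
      c ≠ 0 ∧ (∀ i, IsUnit (g i)) ∧ φ = c • localAct n g ψ := by
  simp only [SLOCCEquiv, funext_iff, Pi.smul_apply, smul_eq_mul, localAct]

theorem localAct_smul (n : ℕ) (g : Fin n → Matrix (Fin 2) (Fin 2) ℂ) (a : ℂ)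
    (ψ : Fin (2^n) → ℂ) : localAct n g (a • ψ) = a • localAct n g ψ := by
  ext x
  simp only [localAct, Pi.smul_apply, smul_eq_mul, Finset.mul_sum]
  exact Finset.sum_congr rfl fun _ _ => mul_left_comm _ _ _

def slice (ψ : Fin (2^3) → ℂ) (b : Fin 2) : Matrix (Fin 2) (Fin 2) ℂ :=
  Matrix.of fun j k => ψ ⟨4 * b + 2 * j + k, by omega⟩

theorem apply_eq_slice_bits (ψ : Fin (2^3) → ℂ) (x : Fin (2^3)) :
    ψ x = slice ψ (bit 3 0 x) (bit 3 1 x) (bit 3 2 x) := by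
  fin_cases x <;> rfl

theorem slice_injective : Function.Injective slice := fun ψ φ h => by
  funext x
  rw [apply_eq_slice_bits ψ, apply_eq_slice_bits φ, h]

theorem slice_smul (a : ℂ) (ψ : Fin (2^3) → ℂ) : slice (a • ψ) = a • slice ψ := rfl

def sliceAct (g : Fin 3 → Matrix (Fin 2) (Fin 2) ℂ) (S : Fin 2 → Matrix (Fin 2) (Fin 2) ℂ) :
    Fin 2 → Matrix (Fin 2) (Fin 2) ℂ :=
  fun b => ∑ b', g 0 b b' • (g 1 * S b' * (g 2)ᵀ)

theorem slice_localAct (g : Fin 3 → Matrix (Fin 2) (Fin 2) ℂ) (ψ : Fin (2^3) → ℂ) :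
    slice (localAct 3 g ψ) = sliceAct g (slice ψ) := by
  ext b j k
  fin_cases b <;> fin_cases j <;> fin_cases k <;>
  simp [slice, sliceAct, localAct, Fin.sum_univ_eight, Fin.prod_univ_three, Matrix.mul_apply,
    Fin.sum_univ_two, bit] <;> ring

theorem sliceAct_sliceAct (g h : Fin 3 → Matrix (Fin 2) (Fin 2) ℂ)
    (S : Fin 2 → Matrix (Fin 2) (Fin 2) ℂ) :
    sliceAct g (sliceAct h S) = sliceAct (g * h) S := by
  funext b
  simp only [sliceAct, Pi.mul_apply, Matrix.mul_sum, Matrix.sum_mul, Matrix.mul_smul,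
    Matrix.smul_mul, Finset.smul_sum, smul_smul, Matrix.transpose_mul, Matrix.mul_assoc]
  rw [Finset.sum_comm]
  simp only [Matrix.mul_apply, Finset.sum_smul]

theorem sliceAct_one (S : Fin 2 → Matrix (Fin 2) (Fin 2) ℂ) : sliceAct 1 S = S := by
  funext b
  simp [sliceAct, Matrix.one_apply]

theorem localAct_localAct (g h : Fin 3 → Matrix (Fin 2) (Fin 2) ℂ) (ψ : Fin (2^3) → ℂ) :
    localAct 3 g (localAct 3 h ψ) = localAct 3 (g * h) ψ :=
  slice_injective <| by rw [slice_localAct, slice_localAct, slice_localAct, sliceAct_sliceAct]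

theorem localAct_one (ψ : Fin (2^3) → ℂ) : localAct 3 1 ψ = ψ :=
  slice_injective <| by rw [slice_localAct, sliceAct_one]

theorem SLOCCEquiv.symm {ψ φ : Fin (2^3) → ℂ} (h : SLOCCEquiv 3 ψ φ) : SLOCCEquiv 3 φ ψ := by
  obtain ⟨g, c, hc, hg, rfl⟩ := sloccEquiv_iff.1 h
  have hinv : g⁻¹ * g = 1 := funext fun i =>
    Matrix.nonsing_inv_mul _ ((Matrix.isUnit_iff_isUnit_det _).1 (hg i))
  refine sloccEquiv_iff.2 ⟨g⁻¹, c⁻¹, inv_ne_zero hc, fun i => ?_, ?_⟩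
  · exact Matrix.isUnit_nonsing_inv_iff.2 (hg i)
  · rw [localAct_smul, localAct_localAct, hinv, localAct_one, smul_smul, inv_mul_cancel₀ hc,
      one_smul]

/-- The discriminant of the binary quadratic form `(s, t) ↦ det (s • A + t • B)`. -/
def pencilDisc (A B : Matrix (Fin 2) (Fin 2) ℂ) : ℂ :=
  (det (A + B) - det A - det B) ^ 2 - 4 * det A * det B

theorem pencilDisc_mul_mul (P Q A B : Matrix (Fin 2) (Fin 2) ℂ) :
    pencilDisc (P * A * Q) (P * B * Q) = (det P * det Q) ^ 2 * pencilDisc A B := by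
  simp only [pencilDisc, ← Matrix.add_mul, ← Matrix.mul_add, Matrix.det_mul]
  ring

theorem pencilDisc_smul_add_smul (a b c d : ℂ) (A B : Matrix (Fin 2) (Fin 2) ℂ) :
    pencilDisc (a • A + b • B) (c • A + d • B) = (a * d - b * c) ^ 2 * pencilDisc A B := by
  simp only [pencilDisc, Matrix.det_fin_two, Matrix.add_apply, Matrix.smul_apply, smul_eq_mul]
  ring

/-- Cayley's hyperdeterminant of a 3-qubit state. -/
def hyperdet (ψ : Fin (2^3) → ℂ) : ℂ := pencilDisc (slice ψ 0) (slice ψ 1)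

theorem hyperdet_smul_localAct (c : ℂ) (g : Fin 3 → Matrix (Fin 2) (Fin 2) ℂ)
    (ψ : Fin (2^3) → ℂ) :
    hyperdet (c • localAct 3 g ψ) =
      c ^ 4 * (det (g 0) * det (g 1) * det (g 2)) ^ 2 * hyperdet ψ := by
  simp only [hyperdet, slice_smul, slice_localAct, sliceAct, Fin.sum_univ_two, Pi.smul_apply,
    smul_add, smul_smul, pencilDisc_smul_add_smul, pencilDisc_mul_mul, Matrix.det_transpose,
    Matrix.det_fin_two (g 0)]
  ring

theorem SLOCCEquiv.hyperdet_eq_zero_iff {ψ φ : Fin (2^3) → ℂ} (h : SLOCCEquiv 3 ψ φ) :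
    hyperdet φ = 0 ↔ hyperdet ψ = 0 := by
  obtain ⟨g, c, hc, hg, rfl⟩ := sloccEquiv_iff.1 h
  have hdet : ∀ i, det (g i) ≠ 0 := fun i => ((Matrix.isUnit_iff_isUnit_det _).1 (hg i)).ne_zero
  rw [hyperdet_smul_localAct]
  simp [hc, hdet]

theorem slice_GHZ : slice (GHZ 3) = (Real.sqrt 2 : ℂ)⁻¹ • ![!![1, 0; 0, 0], !![0, 0; 0, 1]] := by
  ext b j k
  fin_cases b <;> fin_cases j <;> fin_cases k <;> simp [slice, GHZ]

theorem hyperdet_GHZ_ne_zero : hyperdet (GHZ 3) ≠ 0 := by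
  simp [hyperdet, slice_GHZ, pencilDisc, Matrix.det_fin_two]

theorem hyperdet_W3_eq_zero : hyperdet W3 = 0 := by
  simp [hyperdet, pencilDisc, slice, W3, Matrix.det_fin_two]

def ζ₈ : ℂ := Complex.exp (Real.pi * Complex.I / 4)

theorem ζ₈_pow_four : ζ₈ ^ 4 = -1 := by
  rw [ζ₈, ← Complex.exp_nat_mul, ← Complex.exp_pi_mul_I]
  ring_nf

theorem exp_eq_ζ₈_pow (x y : ℕ) :
    Complex.exp (2 * Real.pi * Complex.I * x * y / ((2^3 : ℕ) : ℂ)) = ζ₈ ^ (x * y) := by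
  rw [ζ₈, ← Complex.exp_nat_mul]
  push_cast
  ring_nf

theorem qft_W3_apply (y : Fin (2^3)) :
    QFT 3 W3 y = ((Real.sqrt (2^3) : ℂ) * Real.sqrt 3)⁻¹ *
      (ζ₈ ^ (y : ℕ) + ζ₈ ^ (2 * y : ℕ) + ζ₈ ^ (4 * y : ℕ)) := by
  simp only [QFT, exp_eq_ζ₈_pow]
  simp [W3, Fin.sum_univ_eight]
  ring

/-- Column `m` of `qftW3Frame i` is the factor on qubit `i` of the `m`-th product state in a
splitting of `ζ^y + ζ^{2y} + ζ^{4y}` as `√2` times a sum of two product states; the entries are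
written with `i = ζ²` and `√2 = ζ - ζ³`. -/
def qftW3Frame : Fin 3 → Matrix (Fin 2) (Fin 2) ℂ :=
  ![!![1 + ζ₈ + ζ₈ ^ 3, 1; -1 + ζ₈ + ζ₈ ^ 3, 1],
    !![1, 2 - ζ₈ - ζ₈ ^ 3; ζ₈ ^ 2, ζ₈ - ζ₈ ^ 3],
    !![1, 1; ζ₈, 0]]

theorem isUnit_qftW3Frame (i : Fin 3) : IsUnit (qftW3Frame i) := by
  have hζ : ζ₈ ≠ 0 := Complex.exp_ne_zero _
  rw [Matrix.isUnit_iff_isUnit_det, isUnit_iff_ne_zero]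
  fin_cases i <;> simp only [qftW3Frame, Fin.zero_eta, Fin.mk_one, Fin.reduceFinMk, cons_val_zero,
    cons_val_one, cons_val, det_fin_two_of]
  · rw [show (1 + ζ₈ + ζ₈ ^ 3) * 1 - 1 * (-1 + ζ₈ + ζ₈ ^ 3) = 2 by ring]
    exact two_ne_zero
  · rw [show 1 * (ζ₈ - ζ₈ ^ 3) - (2 - ζ₈ - ζ₈ ^ 3) * ζ₈ ^ 2 = -2 * ζ₈ ^ 2 by
      linear_combination ζ₈ * ζ₈_pow_four]
    simp [hζ]
  · simpa using hζ

theorem qft_W3_eq_smul_localAct_GHZ :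
    QFT 3 W3 = (((Real.sqrt (2^3) : ℂ) * Real.sqrt 3)⁻¹ * Real.sqrt 2) •
      localAct 3 qftW3Frame (GHZ 3) := by
  have hs : (Real.sqrt 2 : ℂ) ≠ 0 := by simp
  have hζ := ζ₈_pow_four
  apply slice_injective
  rw [slice_smul, slice_localAct, slice_GHZ]
  ext b j k
  fin_cases b <;> fin_cases j <;> fin_cases k <;>
  simp [slice, sliceAct, qft_W3_apply, qftW3Frame, Fin.sum_univ_two, Matrix.vecMul,
    dotProduct] <;>
  field_simp <;> grind

/-- the QFT of the 3-qubit W state is SLOCC-equivalent to `GHZ_3`, in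
particular not in the SLOCC orbit of `W`. -/
theorem stmt_16 :
    SLOCCEquiv 3 (QFT 3 W3) (GHZ 3) ∧ ¬ SLOCCEquiv 3 (QFT 3 W3) W3 := by
  have hGHZ : SLOCCEquiv 3 (GHZ 3) (QFT 3 W3) :=
    sloccEquiv_iff.2 ⟨qftW3Frame, _, by simp, isUnit_qftW3Frame, qft_W3_eq_smul_localAct_GHZ⟩
  refine ⟨hGHZ.symm, fun hW => hyperdet_GHZ_ne_zero ?_⟩
  exact hGHZ.hyperdet_eq_zero_iff.1 (hW.hyperdet_eq_zero_iff.1 hyperdet_W3_eq_zero)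
end
end
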